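/- Let G_k (k ≥ 1) be the graph obtained from k copies of the 4-cycle (x_i, y_i, z_i, v_i, x_i) by identifying all vertices v_i into a single vertex v. Then γ(G_k) = k + 1 and G_k is γ-q-critical with q = n(G_k) − k = 2k + 1. -/

import Mathlib

open SimpleGraph

/-- `D` is a dominating set of `G`. -/
def SimpleGraph.IsDomSet {V : Type*} (G : SimpleGraph V) (D : Set V) : Prop :=
  ∀ v ∉ D, ∃ u ∈ D, G.Adj u v

/-- The domination number of `G`. -/
noncomputable def SimpleGraph.domNum {V : Type*} [Fintype V] (G : SimpleGraph V) : ℕ :=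
  sInf {k | ∃ D : Finset V, D.card = k ∧ G.IsDomSet ↑D}

/-- The graph obtained from `G` by subdividing each edge in `F` once: each `e ∈ F`
contributes a new vertex adjacent to the two endpoints of `e`, and the edges of `F`
are removed. -/
def SimpleGraph.subdiv {V : Type*} (G : SimpleGraph V) (F : Finset (Sym2 V)) :
    SimpleGraph (V ⊕ {e : Sym2 V // e ∈ F}) :=
  SimpleGraph.fromRel (fun a b => match a, b with
    | Sum.inl u, Sum.inl v => G.Adj u v ∧ s(u, v) ∉ F
    | Sum.inl u, Sum.inr e => u ∈ (e : Sym2 V)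
    | _, _ => False)

/-- `G` is `γ`-`q`-critical: subdividing any `q` edges increases the domination number,
while some set of `q - 1` edges can be subdivided without increasing it. -/
def SimpleGraph.IsQCritical {V : Type*} [Fintype V] (G : SimpleGraph V) (q : ℕ) : Prop :=
  (∀ F : Finset (Sym2 V), ↑F ⊆ G.edgeSet → F.card = q →
      G.domNum < (G.subdiv F).domNum) ∧
  (∃ F : Finset (Sym2 V), ↑F ⊆ G.edgeSet ∧ F.card = q - 1 ∧
      (G.subdiv F).domNum = G.domNum)

/-- The graph `G_k`: `k` four-cycles `xᵢ yᵢ zᵢ v` sharing the common vertex `v`.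
Vertex `(i, 0)` is `xᵢ`, `(i, 1)` is `yᵢ`, `(i, 2)` is `zᵢ`, and `Sum.inr ()` is `v`. -/
def Gk (k : ℕ) : SimpleGraph ((Fin k × Fin 3) ⊕ Unit) :=
  SimpleGraph.fromRel (fun a b => match a, b with
    | Sum.inl (i, x), Sum.inl (j, y) => i = j ∧ ((x = 0 ∧ y = 1) ∨ (x = 1 ∧ y = 2))
    | Sum.inr _, Sum.inl (_, x) => x = 0 ∨ x = 2
    | _, _ => False)

/-!
Call the *cell* of the `j`-th cycle its vertices `xⱼ, yⱼ, zⱼ` together with the subdivision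
vertices of its four edges. The closed neighbourhood of `yⱼ` lies in the cell, so a dominating set
meets every cell; if it avoids `v`, the cell holding the dominator of `v` needs a second vertex on
the far side of its cycle. Hence every subdivision of `G_k`, `G_k` itself included, has
`γ ≥ k + 1`, and `{v, y₁, …, y_k}` still dominates after the `2k` edges `xⱼyⱼ, yⱼzⱼ` are
subdivided. Subdividing `2k + 1` edges puts three of them into one cycle, whose cell then needs
two dominators, and three if it also dominates `v`, so `γ` rises to `k + 2`. Inside a cell all of
this is linear arithmetic on the `0/1` occupation numbers of its (at most) seven vertices, once
the four edges are known to be subdivided or not.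
-/

open Finset

namespace SimpleGraph

variable {V W : Type*} {G : SimpleGraph V} {G' : SimpleGraph W}

theorem IsDomSet.exists_mem_eq_or_adj {D : Set V} (hD : G.IsDomSet D) (w : V) :
    ∃ u ∈ D, u = w ∨ G.Adj u w := by
  by_cases hw : w ∈ D
  · exact ⟨w, hw, .inl rfl⟩
  · obtain ⟨u, hu, huw⟩ := hD w hw
    exact ⟨u, hu, .inr huw⟩

theorem IsDomSet.image (e : G ≃g G') {D : Set V} (hD : G.IsDomSet D) :
    G'.IsDomSet (e '' D) := by
  intro w hw
  obtain ⟨u, hu, huw⟩ := hD (e.symm w) fun h => hw ⟨_, h, e.apply_symm_apply w⟩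
  exact ⟨e u, Set.mem_image_of_mem e hu, by simpa using e.map_rel_iff.2 huw⟩

section Fintype

variable [Fintype V] [Fintype W]

theorem domNum_le_card {D : Finset V} (hD : G.IsDomSet ↑D) : G.domNum ≤ #D :=
  Nat.sInf_le ⟨D, rfl, hD⟩

theorem exists_isDomSet_card_eq_domNum (G : SimpleGraph V) :
    ∃ D : Finset V, #D = G.domNum ∧ G.IsDomSet ↑D :=
  Nat.sInf_mem (s := {n | ∃ D : Finset V, #D = n ∧ G.IsDomSet ↑D})
    ⟨_, univ, rfl, fun w hw => absurd (mem_coe.2 (mem_univ w)) hw⟩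

theorem domNum_le_of_iso (e : G ≃g G') : G'.domNum ≤ G.domNum := by
  classical
  obtain ⟨D, hcard, hD⟩ := G.exists_isDomSet_card_eq_domNum
  calc G'.domNum ≤ #(D.map e.toEquiv.toEmbedding) := domNum_le_card (by simpa using hD.image e)
    _ = G.domNum := by rw [card_map, hcard]

theorem Iso.domNum_eq (e : G ≃g G') : G.domNum = G'.domNum :=
  le_antisymm (domNum_le_of_iso e.symm) (domNum_le_of_iso e)

end Fintype

section Subdivision

variable {F : Finset (Sym2 V)}

@[simp] theorem subdiv_adj_inl_inl {a b : V} :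
    (G.subdiv F).Adj (.inl a) (.inl b) ↔ G.Adj a b ∧ s(a, b) ∉ F := by
  simp only [subdiv, fromRel_adj, ne_eq, Sum.inl.injEq]
  constructor
  · rintro ⟨-, h | ⟨hba, hF⟩⟩
    · exact h
    · exact ⟨hba.symm, Sym2.eq_swap (a := b) ▸ hF⟩
  · rintro ⟨hab, hF⟩
    exact ⟨hab.ne, .inl ⟨hab, hF⟩⟩

@[simp] theorem subdiv_adj_inl_inr {a : V} {e : {e // e ∈ F}} :
    (G.subdiv F).Adj (.inl a) (.inr e) ↔ a ∈ (e : Sym2 V) := by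
  simp [subdiv, fromRel_adj]

@[simp] theorem subdiv_adj_inr_inl {a : V} {e : {e // e ∈ F}} :
    (G.subdiv F).Adj (.inr e) (.inl a) ↔ a ∈ (e : Sym2 V) := by
  simp [subdiv, fromRel_adj]

@[simp] theorem subdiv_not_adj_inr_inr {e e' : {e // e ∈ F}} :
    ¬ (G.subdiv F).Adj (.inr e) (.inr e') := by
  simp [subdiv, fromRel_adj]

def subdivEmptyIso (G : SimpleGraph V) : G.subdiv ∅ ≃g G :=
  haveI : IsEmpty {e : Sym2 V // e ∈ (∅ : Finset (Sym2 V))} := ⟨fun e => notMem_empty _ e.2⟩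
  { Equiv.sumEmpty V _ with
    map_rel_iff' := by rintro (a | ⟨_, ⟨⟩⟩) (b | ⟨_, ⟨⟩⟩); simp }

/- Vertices of `G.subdiv F` are labelled in `V ⊕ Sym2 V`, a subdivision vertex by its edge, so
that labels do not carry membership proofs. `subdivToward F a b` is the label of the first vertex
on the way from `a` to its `G`-neighbour `b`. -/

def subdivLabel (F : Finset (Sym2 V)) : V ⊕ {e // e ∈ F} ↪ V ⊕ Sym2 V :=
  (Function.Embedding.refl V).sumMap (Function.Embedding.subtype _)

variable [DecidableEq V]

def subdivToward (F : Finset (Sym2 V)) (a b : V) : V ⊕ Sym2 V :=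
  if s(a, b) ∈ F then .inr s(a, b) else .inl b

def SubdivDominates (G : SimpleGraph V) (F : Finset (Sym2 V)) (L : Finset (V ⊕ Sym2 V)) :
    Prop :=
  (∀ a, .inl a ∈ L ∨ ∃ b, G.Adj a b ∧ subdivToward F a b ∈ L) ∧
    ∀ a b, s(a, b) ∈ F → .inr s(a, b) ∈ L ∨ .inl a ∈ L ∨ .inl b ∈ L

theorem IsDomSet.subdivDominates (hF : ↑F ⊆ G.edgeSet) {D : Finset (V ⊕ {e // e ∈ F})}
    (hD : (G.subdiv F).IsDomSet ↑D) : G.SubdivDominates F (D.map (subdivLabel F)) := by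
  refine ⟨fun a => ?_, fun a b hab => ?_⟩
  · obtain ⟨b | ⟨e, he⟩, hu, hua⟩ := hD.exists_mem_eq_or_adj (.inl a)
    · rcases hua with hba | hba
      · obtain rfl := Sum.inl_injective hba
        exact .inl (mem_map_of_mem _ hu)
      · rw [subdiv_adj_inl_inl, Sym2.eq_swap] at hba
        refine .inr ⟨b, hba.1.symm, ?_⟩
        rw [subdivToward, if_neg hba.2]
        exact mem_map_of_mem (subdivLabel F) hu
    · rw [or_iff_right Sum.inr_ne_inl, subdiv_adj_inr_inl] at hua
      obtain ⟨b, rfl⟩ := Sym2.mem_iff_exists.1 hua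
      refine .inr ⟨b, hF he, ?_⟩
      rw [subdivToward, if_pos he]
      exact mem_map_of_mem (subdivLabel F) hu
  · obtain ⟨w | e, hu, hue⟩ := hD.exists_mem_eq_or_adj (.inr ⟨s(a, b), hab⟩)
    · rw [or_iff_right Sum.inl_ne_inr, subdiv_adj_inl_inr] at hue
      rcases Sym2.mem_iff.1 hue with rfl | rfl
      · exact .inr (.inl (mem_map_of_mem _ hu))
      · exact .inr (.inr (mem_map_of_mem _ hu))
    · rcases hue with he | h
      · obtain rfl := Sum.inr_injective he
        exact .inl (mem_map_of_mem _ hu)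
      · exact absurd h subdiv_not_adj_inr_inr

end Subdivision

end SimpleGraph

section Occupancy

variable {α : Type*} [DecidableEq α]

def occ (L : Finset α) (t : α) : ℕ := if t ∈ L then 1 else 0

theorem occ_of_mem {L : Finset α} {t : α} (h : t ∈ L) : occ L t = 1 := if_pos h

theorem occ_of_notMem {L : Finset α} {t : α} (h : t ∉ L) : occ L t = 0 := if_neg h

theorem sum_occ (T L : Finset α) : ∑ t ∈ T, occ L t = #(T ∩ L) := by
  rw [← filter_mem_eq_inter, card_filter]
  rfl

namespace SimpleGraph.SubdivDominates

variable {V : Type*} [DecidableEq V] {G : SimpleGraph V} {F : Finset (Sym2 V)}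
  {L : Finset (V ⊕ Sym2 V)}

theorem one_le_occ_inl (hL : G.SubdivDominates F L) {a b₁ b₂ : V}
    (hN : ∀ b, G.Adj a b → b = b₁ ∨ b = b₂) :
    1 ≤ occ L (.inl a) + occ L (subdivToward F a b₁) + occ L (subdivToward F a b₂) := by
  rcases hL.1 a with h | ⟨b, hab, hb⟩
  · rw [occ_of_mem h]; omega
  · rcases hN b hab with rfl | rfl <;> rw [occ_of_mem hb] <;> omega

theorem one_le_occ_inr (hL : G.SubdivDominates F L) {a b : V} (hab : s(a, b) ∈ F) :
    1 ≤ occ L (.inr s(a, b)) + occ L (.inl a) + occ L (.inl b) := by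
  rcases hL.2 a b hab with h | h | h <;> rw [occ_of_mem h] <;> omega

end SimpleGraph.SubdivDominates

end Occupancy

theorem card_add_sum_tsub_one_le {ι : Type*} [Fintype ι] {g : ι → ℕ} (hg : ∀ i, 1 ≤ g i)
    (s : Finset ι) : Fintype.card ι + ∑ i ∈ s, (g i - 1) ≤ ∑ i, g i := by
  calc Fintype.card ι + ∑ i ∈ s, (g i - 1) ≤ ∑ _i : ι, 1 + ∑ i, (g i - 1) := by
        simpa using sum_le_sum_of_subset (subset_univ s)
    _ = ∑ i, g i := by
        rw [← sum_add_distrib]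
        exact sum_congr rfl fun i _ => by have := hg i; omega

namespace Gk

variable {k : ℕ}

abbrev Vert (k : ℕ) := (Fin k × Fin 3) ⊕ Unit

def x (j : Fin k) : Vert k := .inl (j, 0)
def y (j : Fin k) : Vert k := .inl (j, 1)
def z (j : Fin k) : Vert k := .inl (j, 2)
def v : Vert k := .inr ()

def xy (j : Fin k) : Sym2 (Vert k) := s(x j, y j)
def yz (j : Fin k) : Sym2 (Vert k) := s(y j, z j)
def vx (j : Fin k) : Sym2 (Vert k) := s(v, x j)
def vz (j : Fin k) : Sym2 (Vert k) := s(v, z j)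

@[simp] theorem mk_x_y (j : Fin k) : s(x j, y j) = xy j := rfl
@[simp] theorem mk_y_x (j : Fin k) : s(y j, x j) = xy j := Sym2.eq_swap
@[simp] theorem mk_y_z (j : Fin k) : s(y j, z j) = yz j := rfl
@[simp] theorem mk_z_y (j : Fin k) : s(z j, y j) = yz j := Sym2.eq_swap
@[simp] theorem mk_v_x (j : Fin k) : s(v, x j) = vx j := rfl
@[simp] theorem mk_x_v (j : Fin k) : s(x j, v) = vx j := Sym2.eq_swap
@[simp] theorem mk_v_z (j : Fin k) : s(v, z j) = vz j := rfl
@[simp] theorem mk_z_v (j : Fin k) : s(z j, v) = vz j := Sym2.eq_swap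

theorem vert_cases (a : Vert k) : a = v ∨ ∃ j, a = x j ∨ a = y j ∨ a = z j := by
  rcases a with ⟨j, c⟩ | ⟨⟩
  · fin_cases c <;> simp [x, y, z]
  · exact .inl rfl

theorem adj_x_iff {j : Fin k} {b : Vert k} : (Gk k).Adj (x j) b ↔ b = y j ∨ b = v := by
  rcases b with ⟨i, c⟩ | ⟨⟩ <;> simp [Gk, x, y, v, fromRel_adj]
  fin_cases c <;> simp [eq_comm]

theorem adj_y_iff {j : Fin k} {b : Vert k} : (Gk k).Adj (y j) b ↔ b = x j ∨ b = z j := by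
  rcases b with ⟨i, c⟩ | ⟨⟩ <;> simp [Gk, x, y, z, fromRel_adj]
  fin_cases c <;> simp [eq_comm]

theorem adj_z_iff {j : Fin k} {b : Vert k} : (Gk k).Adj (z j) b ↔ b = y j ∨ b = v := by
  rcases b with ⟨i, c⟩ | ⟨⟩ <;> simp [Gk, z, y, v, fromRel_adj]
  fin_cases c <;> simp [eq_comm]

theorem adj_v_iff {b : Vert k} : (Gk k).Adj v b ↔ ∃ j, b = x j ∨ b = z j := by
  rcases b with ⟨i, c⟩ | ⟨⟩ <;> simp [Gk, x, z, v, fromRel_adj]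
  fin_cases c <;> simp

def cycleEdges (j : Fin k) : Finset (Sym2 (Vert k)) := {xy j, yz j, vx j, vz j}

theorem cycleEdges_subset_edgeSet (j : Fin k) : ↑(cycleEdges j) ⊆ (Gk k).edgeSet := by
  intro e he
  simp only [cycleEdges, coe_insert, coe_singleton, Set.mem_insert_iff,
    Set.mem_singleton_iff] at he
  rcases he with rfl | rfl | rfl | rfl
  · exact adj_x_iff.2 (.inl rfl)
  · exact adj_y_iff.2 (.inr rfl)
  · exact adj_v_iff.2 ⟨j, .inl rfl⟩
  · exact adj_v_iff.2 ⟨j, .inr rfl⟩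

theorem exists_mem_cycleEdges {e : Sym2 (Vert k)} (he : e ∈ (Gk k).edgeSet) :
    ∃ j, e ∈ cycleEdges j := by
  induction e using Sym2.ind with | _ a b => ?_
  rw [mem_edgeSet] at he
  rcases vert_cases a with rfl | ⟨j, rfl | rfl | rfl⟩
  · obtain ⟨j, rfl | rfl⟩ := adj_v_iff.1 he <;> exact ⟨j, by simp [cycleEdges]⟩
  · rcases adj_x_iff.1 he with rfl | rfl <;> exact ⟨j, by simp [cycleEdges]⟩
  · rcases adj_y_iff.1 he with rfl | rfl <;> exact ⟨j, by simp [cycleEdges]⟩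
  · rcases adj_z_iff.1 he with rfl | rfl <;> exact ⟨j, by simp [cycleEdges]⟩

theorem disjoint_cycleEdges {i j : Fin k} (hij : i ≠ j) :
    Disjoint (cycleEdges i) (cycleEdges j) := by
  rw [Finset.disjoint_left]
  intro e hi hj
  simp only [cycleEdges, mem_insert, mem_singleton] at hi hj
  rcases hi with rfl | rfl | rfl | rfl <;> simp [xy, yz, vx, vz, x, y, z, v, hij] at hj

variable {F : Finset (Sym2 (Vert k))} {L : Finset (Vert k ⊕ Sym2 (Vert k))}

theorem card_eq_sum_card_inter_cycleEdges (hF : ↑F ⊆ (Gk k).edgeSet) :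
    #F = ∑ j, #(F ∩ cycleEdges j) := by
  rw [← card_biUnion fun i _ j _ hij =>
    (disjoint_cycleEdges hij).mono inter_subset_right inter_subset_right]
  congr 1
  ext e
  simp only [mem_biUnion, mem_univ, true_and, mem_inter]
  exact ⟨fun he => (exists_mem_cycleEdges (hF he)).imp fun _ h => ⟨he, h⟩, fun ⟨_, he, _⟩ => he⟩

theorem card_inter_cycleEdges (F : Finset (Sym2 (Vert k))) (j : Fin k) :
    #(F ∩ cycleEdges j) = occ F (xy j) + occ F (yz j) + occ F (vx j) + occ F (vz j) := by
  rw [inter_comm, ← sum_occ]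
  simp [cycleEdges, xy, yz, vx, vz, x, y, z, v, add_assoc]

theorem exists_three_le_card_inter_cycleEdges (hF : ↑F ⊆ (Gk k).edgeSet)
    (hcard : #F = 2 * k + 1) : ∃ j, 3 ≤ #(F ∩ cycleEdges j) := by
  by_contra! h
  have : ∑ j, #(F ∩ cycleEdges j) ≤ ∑ _j : Fin k, 2 := sum_le_sum fun j _ => by
    have := h j; omega
  rw [← card_eq_sum_card_inter_cycleEdges hF, hcard] at this
  simp at this
  omega

def cell (j : Fin k) : Finset (Vert k ⊕ Sym2 (Vert k)) :=
  {.inl (x j), .inl (y j), .inl (z j), .inr (xy j), .inr (yz j), .inr (vx j), .inr (vz j)}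

theorem disjoint_cell {i j : Fin k} (hij : i ≠ j) : Disjoint (cell i) (cell j) := by
  rw [Finset.disjoint_left]
  intro t hi hj
  simp only [cell, mem_insert, mem_singleton] at hi hj
  rcases hi with rfl | rfl | rfl | rfl | rfl | rfl | rfl <;>
    simp [x, y, z, v, xy, yz, vx, vz, hij] at hj

theorem card_inter_cell (L : Finset (Vert k ⊕ Sym2 (Vert k))) (j : Fin k) :
    #(L ∩ cell j) = occ L (.inl (x j)) + occ L (.inl (y j)) + occ L (.inl (z j)) +
      occ L (.inr (xy j)) + occ L (.inr (yz j)) + occ L (.inr (vx j)) + occ L (.inr (vz j)) := by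
  rw [inter_comm, ← sum_occ]
  simp [cell, x, y, z, v, xy, yz, vx, vz, add_assoc]

theorem occ_add_sum_card_inter_cell_le (L : Finset (Vert k ⊕ Sym2 (Vert k))) :
    occ L (.inl v) + ∑ j, #(L ∩ cell j) ≤ #L := by
  rw [← card_biUnion fun i _ j _ hij =>
    (disjoint_cell hij).mono inter_subset_right inter_subset_right]
  have hU : (univ.biUnion fun j => L ∩ cell j) ⊆ L := biUnion_subset.2 fun _ _ => inter_subset_left
  by_cases hv : .inl v ∈ L
  · have hvU : .inl v ∉ univ.biUnion fun j => L ∩ cell j := by simp [cell, x, y, z, v]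
    rw [occ_of_mem hv, add_comm, ← card_insert_of_notMem hvU]
    exact card_le_card (insert_subset hv hU)
  · rw [occ_of_notMem hv, zero_add]
    exact card_le_card hU

theorem exists_toward_v_mem (hL : (Gk k).SubdivDominates F L) (hv : .inl v ∉ L) :
    ∃ j, subdivToward F v (x j) ∈ L ∨ subdivToward F v (z j) ∈ L := by
  obtain ⟨b, hb, hbL⟩ := (hL.1 v).resolve_left hv
  obtain ⟨j, rfl | rfl⟩ := adj_v_iff.1 hb
  exacts [⟨j, .inl hbL⟩, ⟨j, .inr hbL⟩]

theorem one_le_card_inter_cell (hL : (Gk k).SubdivDominates F L) (j : Fin k) :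
    1 ≤ #(L ∩ cell j) := by
  obtain h | ⟨b, hb, hbL⟩ := hL.1 (y j)
  · exact card_pos.2 ⟨_, mem_inter.2 ⟨h, by simp [cell]⟩⟩
  · refine card_pos.2 ⟨_, mem_inter.2 ⟨hbL, ?_⟩⟩
    rcases adj_y_iff.1 hb with rfl | rfl <;> unfold subdivToward <;> split_ifs <;> simp [cell]

theorem cell_constraints (hL : (Gk k).SubdivDominates F L) (j : Fin k) :
    1 ≤ occ L (.inl (x j)) + occ L (subdivToward F (x j) (y j)) + occ L (subdivToward F (x j) v) ∧
    1 ≤ occ L (.inl (y j)) + occ L (subdivToward F (y j) (x j)) +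
      occ L (subdivToward F (y j) (z j)) ∧
    1 ≤ occ L (.inl (z j)) + occ L (subdivToward F (z j) (y j)) + occ L (subdivToward F (z j) v) ∧
    (xy j ∈ F → 1 ≤ occ L (.inr (xy j)) + occ L (.inl (x j)) + occ L (.inl (y j))) ∧
    (yz j ∈ F → 1 ≤ occ L (.inr (yz j)) + occ L (.inl (y j)) + occ L (.inl (z j))) ∧
    (vx j ∈ F → 1 ≤ occ L (.inr (vx j)) + occ L (.inl v) + occ L (.inl (x j))) ∧
    (vz j ∈ F → 1 ≤ occ L (.inr (vz j)) + occ L (.inl v) + occ L (.inl (z j))) :=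
  ⟨hL.one_le_occ_inl fun _ => adj_x_iff.1, hL.one_le_occ_inl fun _ => adj_y_iff.1,
    hL.one_le_occ_inl fun _ => adj_z_iff.1, hL.one_le_occ_inr, hL.one_le_occ_inr,
    hL.one_le_occ_inr, hL.one_le_occ_inr⟩

theorem two_le_card_inter_cell_of_toward_v_mem (hL : (Gk k).SubdivDominates F L) {j : Fin k}
    (hv : .inl v ∉ L) (hj : subdivToward F v (x j) ∈ L ∨ subdivToward F v (z j) ∈ L) :
    2 ≤ #(L ∩ cell j) := by
  obtain ⟨hx, hy, hz, hxy, hyz, hvx, hvz⟩ := cell_constraints hL j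
  have hvj : 1 ≤ occ L (subdivToward F v (x j)) + occ L (subdivToward F v (z j)) := by
    rcases hj with h | h <;> rw [occ_of_mem h] <;> omega
  rw [occ_of_notMem hv] at hvx hvz
  rw [card_inter_cell]
  by_cases h₁ : xy j ∈ F <;> by_cases h₂ : yz j ∈ F <;> by_cases h₃ : vx j ∈ F <;>
    by_cases h₄ : vz j ∈ F <;>
    simp only [subdivToward, mk_x_y, mk_y_x, mk_y_z, mk_z_y, mk_v_x, mk_x_v, mk_v_z, mk_z_v,
      occ_of_notMem, h₁, h₂, h₃, h₄, hv, if_true, if_false, true_implies,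
      not_false_eq_true] at hx hy hz hxy hyz hvx hvz hvj ⊢ <;> omega

theorem two_le_card_inter_cell_of_three_le (hL : (Gk k).SubdivDominates F L) {j : Fin k}
    (hF : 3 ≤ #(F ∩ cycleEdges j)) : 2 ≤ #(L ∩ cell j) := by
  obtain ⟨hx, hy, hz, hxy, hyz, hvx, hvz⟩ := cell_constraints hL j
  rw [card_inter_cycleEdges] at hF
  rw [card_inter_cell]
  by_cases h₁ : xy j ∈ F <;> by_cases h₂ : yz j ∈ F <;> by_cases h₃ : vx j ∈ F <;>
    by_cases h₄ : vz j ∈ F <;>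
    simp only [subdivToward, mk_x_y, mk_y_x, mk_y_z, mk_z_y, mk_x_v, mk_z_v, occ_of_mem,
      occ_of_notMem, h₁, h₂, h₃, h₄, if_true, if_false, true_implies,
      not_false_eq_true] at hx hy hz hxy hyz hvx hvz hF ⊢ <;> omega

theorem three_le_card_inter_cell (hL : (Gk k).SubdivDominates F L) {j : Fin k}
    (hv : .inl v ∉ L) (hj : subdivToward F v (x j) ∈ L ∨ subdivToward F v (z j) ∈ L)
    (hF : 3 ≤ #(F ∩ cycleEdges j)) : 3 ≤ #(L ∩ cell j) := by
  obtain ⟨hx, hy, hz, hxy, hyz, hvx, hvz⟩ := cell_constraints hL j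
  have hvj : 1 ≤ occ L (subdivToward F v (x j)) + occ L (subdivToward F v (z j)) := by
    rcases hj with h | h <;> rw [occ_of_mem h] <;> omega
  rw [occ_of_notMem hv] at hvx hvz
  rw [card_inter_cycleEdges] at hF
  rw [card_inter_cell]
  by_cases h₁ : xy j ∈ F <;> by_cases h₂ : yz j ∈ F <;> by_cases h₃ : vx j ∈ F <;>
    by_cases h₄ : vz j ∈ F <;>
    simp only [subdivToward, mk_x_y, mk_y_x, mk_y_z, mk_z_y, mk_v_x, mk_x_v, mk_v_z, mk_z_v,
      occ_of_mem, occ_of_notMem, h₁, h₂, h₃, h₄, hv, if_true, if_false, true_implies,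
      not_false_eq_true] at hx hy hz hxy hyz hvx hvz hvj hF ⊢ <;> omega

theorem le_card_of_subdivDominates (hL : (Gk k).SubdivDominates F L) : k + 1 ≤ #L := by
  have hcount := occ_add_sum_card_inter_cell_le L
  have hpos := one_le_card_inter_cell hL
  by_cases hv : .inl v ∈ L
  · have := card_add_sum_tsub_one_le hpos ∅
    rw [occ_of_mem hv] at hcount
    rw [sum_empty, Fintype.card_fin] at this
    omega
  · obtain ⟨l, hl⟩ := exists_toward_v_mem hL hv
    have hl2 := two_le_card_inter_cell_of_toward_v_mem hL hv hl
    have := card_add_sum_tsub_one_le hpos {l}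
    rw [sum_singleton, Fintype.card_fin] at this
    omega

theorem le_card_of_three_le (hL : (Gk k).SubdivDominates F L) {j : Fin k}
    (hF : 3 ≤ #(F ∩ cycleEdges j)) : k + 2 ≤ #L := by
  have hcount := occ_add_sum_card_inter_cell_le L
  have hpos := one_le_card_inter_cell hL
  have hj := two_le_card_inter_cell_of_three_le hL hF
  by_cases hv : .inl v ∈ L
  · have := card_add_sum_tsub_one_le hpos {j}
    rw [occ_of_mem hv] at hcount
    rw [sum_singleton, Fintype.card_fin] at this
    omega
  · obtain ⟨l, hl⟩ := exists_toward_v_mem hL hv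
    obtain rfl | hlj := eq_or_ne l j
    · have hl3 := three_le_card_inter_cell hL hv hl hF
      have := card_add_sum_tsub_one_le hpos {l}
      rw [sum_singleton, Fintype.card_fin] at this
      omega
    · have hl2 := two_le_card_inter_cell_of_toward_v_mem hL hv hl
      have := card_add_sum_tsub_one_le hpos {l, j}
      rw [sum_pair hlj, Fintype.card_fin] at this
      omega

theorem add_one_le_domNum_subdiv (hF : ↑F ⊆ (Gk k).edgeSet) :
    k + 1 ≤ ((Gk k).subdiv F).domNum := by
  obtain ⟨D, hcard, hD⟩ := ((Gk k).subdiv F).exists_isDomSet_card_eq_domNum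
  rw [← hcard, ← card_map (subdivLabel F)]
  exact le_card_of_subdivDominates (hD.subdivDominates hF)

theorem add_two_le_domNum_subdiv (hF : ↑F ⊆ (Gk k).edgeSet) (hFcard : #F = 2 * k + 1) :
    k + 2 ≤ ((Gk k).subdiv F).domNum := by
  obtain ⟨j, hj⟩ := exists_three_le_card_inter_cycleEdges hF hFcard
  obtain ⟨D, hcard, hD⟩ := ((Gk k).subdiv F).exists_isDomSet_card_eq_domNum
  rw [← hcard, ← card_map (subdivLabel F)]
  exact le_card_of_three_le (hD.subdivDominates hF) hj

def rimEdges (k : ℕ) : Finset (Sym2 (Vert k)) := univ.biUnion fun j => {xy j, yz j}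

theorem rimEdges_subset_edgeSet : ↑(rimEdges k) ⊆ (Gk k).edgeSet := by
  intro e he
  obtain ⟨j, -, hj⟩ := mem_biUnion.1 he
  refine cycleEdges_subset_edgeSet j ?_
  rcases mem_insert.1 hj with rfl | hj
  · simp [cycleEdges]
  · simp [cycleEdges, mem_singleton.1 hj]

theorem card_rimEdges : #(rimEdges k) = 2 * k := by
  rw [rimEdges, card_biUnion fun i _ j _ hij => (disjoint_cycleEdges hij).mono
    (by simp [cycleEdges, insert_subset_iff]) (by simp [cycleEdges, insert_subset_iff])]
  simp [xy, yz, x, y, z, mul_comm]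

theorem domNum_subdiv_le (hF : F ⊆ rimEdges k) : ((Gk k).subdiv F).domNum ≤ k + 1 := by
  let D : Finset (Vert k ⊕ {e // e ∈ F}) := insert (.inl v) (univ.image fun j => .inl (y j))
  have hvx : ∀ j, vx j ∉ F := fun j h => by simpa [rimEdges, vx, xy, yz, x, y, z, v] using hF h
  have hvz : ∀ j, vz j ∉ F := fun j h => by simpa [rimEdges, vz, xy, yz, x, y, z, v] using hF h
  refine (domNum_le_card (D := D) fun w hw => ?_).trans
    ((card_insert_le _ _).trans (by simpa using card_image_le (s := (univ : Finset (Fin k)))))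
  rcases w with a | ⟨e, he⟩
  · rcases vert_cases a with rfl | ⟨j, rfl | rfl | rfl⟩
    · exact absurd (by simp [D]) hw
    · exact ⟨.inl v, by simp [D], subdiv_adj_inl_inl.2 ⟨adj_v_iff.2 ⟨j, .inl rfl⟩, hvx j⟩⟩
    · exact absurd (by simp [D]) hw
    · exact ⟨.inl v, by simp [D], subdiv_adj_inl_inl.2 ⟨adj_v_iff.2 ⟨j, .inr rfl⟩, hvz j⟩⟩
  · obtain ⟨j, rfl | rfl⟩ : ∃ j, e = xy j ∨ e = yz j := by simpa [rimEdges] using hF he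
    · exact ⟨.inl (y j), by simp [D], subdiv_adj_inl_inr.2 (Sym2.mem_mk_right _ _)⟩
    · exact ⟨.inl (y j), by simp [D], subdiv_adj_inl_inr.2 (Sym2.mem_mk_left _ _)⟩

theorem domNum_subdiv_eq (hF : F ⊆ rimEdges k) : ((Gk k).subdiv F).domNum = k + 1 :=
  le_antisymm (domNum_subdiv_le hF)
    (add_one_le_domNum_subdiv ((coe_subset.2 hF).trans rimEdges_subset_edgeSet))

theorem domNum_eq : (Gk k).domNum = k + 1 :=
  (subdivEmptyIso (Gk k)).domNum_eq.symm.trans (domNum_subdiv_eq (empty_subset _))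

end Gk

theorem stmt11_general (k : ℕ) :
    (Gk k).domNum = k + 1 ∧ (Gk k).IsQCritical (2 * k + 1) := by
  refine ⟨Gk.domNum_eq, fun F hF hcard => ?_, Gk.rimEdges k, Gk.rimEdges_subset_edgeSet, ?_, ?_⟩
  · rw [Gk.domNum_eq]
    exact Gk.add_two_le_domNum_subdiv hF hcard
  · rw [Gk.card_rimEdges]
    omega
  · rw [Gk.domNum_subdiv_eq subset_rfl, Gk.domNum_eq]

theorem stmt11 (k : ℕ) (hk : 1 ≤ k) :
    (Gk k).domNum = k + 1 ∧ (Gk k).IsQCritical (2 * k + 1) :=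
  stmt11_general k
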